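/- For any two density matrices ρ and σ on ℂ^n, the maximum over all POVM elements T of Tr(Tρ) − Tr(Tσ) equals (1/2)‖ρ − σ‖₁. -/

import Mathlib

open ComplexOrder

/-- The trace norm of a complex matrix: `Tr √(Aᴴ A)`. -/
noncomputable def traceNorm {n : ℕ} (A : Matrix (Fin n) (Fin n) ℂ) : ℝ :=
  ((Matrix.posSemidef_conjTranspose_mul_self A).isHermitian.eigenvectorUnitary.1 *
    Matrix.diagonal ((↑) ∘ Real.sqrt ∘
      (Matrix.posSemidef_conjTranspose_mul_self A).isHermitian.eigenvalues : Fin n → ℂ) *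
    (star (Matrix.posSemidef_conjTranspose_mul_self A).isHermitian.eigenvectorUnitary :
      Matrix (Fin n) (Fin n) ℂ)).trace.re

/-- A POVM element: a matrix `T` with `0 ≤ T ≤ 1` in the Loewner order. -/
def IsPOVMElement {n : ℕ} (T : Matrix (Fin n) (Fin n) ℂ) : Prop :=
  T.PosSemidef ∧ (1 - T).PosSemidef

/-- A density matrix: positive semidefinite with trace 1. -/
def IsDensityMatrix {n : ℕ} (ρ : Matrix (Fin n) (Fin n) ℂ) : Prop :=
  ρ.PosSemidef ∧ ρ.trace = 1

section Aux

open Matrix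

lemma diag_re_nonneg {n : ℕ} {S : Matrix (Fin n) (Fin n) ℂ} (hS : S.PosSemidef) (i : Fin n) :
    0 ≤ (S i i).re := by
  have := hS.diag_nonneg (i := i)
  exact (Complex.le_def.mp this).1

lemma conjmul {n : ℕ} {U : Matrix (Fin n) (Fin n) ℂ} (hUU : star U * U = 1)
    (f g : Fin n → ℂ) :
    (U * diagonal f * star U) * (U * diagonal g * star U)
      = U * diagonal (fun i => f i * g i) * star U := by
  have : (U * diagonal f * star U) * (U * diagonal g * star U)
      = U * (diagonal f * (star U * U) * diagonal g) * star U := by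
    simp only [Matrix.mul_assoc]
  rw [this, hUU, mul_one, diagonal_mul_diagonal]

lemma trace_mul_diag {n : ℕ} (M : Matrix (Fin n) (Fin n) ℂ) (g : Fin n → ℂ) :
    (M * Matrix.diagonal g).trace = ∑ i, M i i * g i := by
  simp [Matrix.trace, Matrix.diag, Matrix.mul_diagonal]

end Aux

/-- For density matrices `ρ, σ`, the maximum of `Tr(Tρ) - Tr(Tσ)` over POVM
elements `T` equals half the trace norm of `ρ - σ`. -/
theorem isGreatest_povm_trace_diff
    {n : ℕ} (ρ σ : Matrix (Fin n) (Fin n) ℂ)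
    (hρ : IsDensityMatrix ρ) (hσ : IsDensityMatrix σ) :
    IsGreatest
      {x : ℝ | ∃ T : Matrix (Fin n) (Fin n) ℂ, IsPOVMElement T ∧
        x = ((T * ρ).trace).re - ((T * σ).trace).re}
      ((1 / 2) * traceNorm (ρ - σ)) := by
  open Matrix in
  obtain ⟨hρp, hρt⟩ := hρ
  obtain ⟨hσp, hσt⟩ := hσ
  set Δ : Matrix (Fin n) (Fin n) ℂ := ρ - σ with hΔdef
  have hΔ : Δ.IsHermitian := hρp.1.sub hσp.1
  set U : Matrix (Fin n) (Fin n) ℂ := (hΔ.eigenvectorUnitary : Matrix (Fin n) (Fin n) ℂ) with hU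
  set e : Fin n → ℝ := hΔ.eigenvalues with he
  have hUU : star U * U = 1 := Matrix.mem_unitaryGroup_iff'.mp hΔ.eigenvectorUnitary.2
  have hUU' : U * star U = 1 := Matrix.mem_unitaryGroup_iff.mp hΔ.eigenvectorUnitary.2
  have spec : Δ = U * diagonal (fun i => (e i : ℂ)) * star U := by
    have := hΔ.spectral_theorem
    exact this
  -- key trace formula
  have key : ∀ T : Matrix (Fin n) (Fin n) ℂ,
      (T * Δ).trace = ∑ i, (star U * T * U) i i * (e i : ℂ) := by
    intro T
    conv_lhs => rw [spec]
    have h1 : T * (U * diagonal (fun i => (e i : ℂ)) * star U)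
        = (T * U * diagonal (fun i => (e i : ℂ))) * star U := by
      simp only [Matrix.mul_assoc]
    rw [h1, Matrix.trace_mul_comm, ← Matrix.mul_assoc, ← Matrix.mul_assoc, trace_mul_diag]
  -- eigenvalues sum to zero
  have htr0 : Δ.trace = 0 := by
    rw [hΔdef, Matrix.trace_sub, hρt, hσt, sub_self]
  have hsum : ∑ i, e i = 0 := by
    have h1 : Δ.trace = ∑ i, (e i : ℂ) := by
      rw [spec, Matrix.trace_mul_cycle, hUU, one_mul, Matrix.trace_diagonal]
    rw [htr0] at h1
    have := congrArg Complex.re h1.symm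
    simpa [Complex.re_sum] using this
  -- trace norm equals sum of |e i|
  have htn : traceNorm Δ = ∑ i, |e i| := by
    set a : Fin n → ℝ := fun i => |e i| with ha
    set B : Matrix (Fin n) (Fin n) ℂ := U * diagonal (fun i => (a i : ℂ)) * star U with hB
    have hBpsd : B.PosSemidef := by
      apply Matrix.PosSemidef.mul_mul_conjTranspose_same
      refine Matrix.posSemidef_diagonal_iff.mpr fun i => ?_
      rw [Complex.le_def]
      simp [ha, abs_nonneg]
    have hB2 : B ^ 2 = Δᴴ * Δ := by
      rw [pow_two, hB, conjmul hUU]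
      rw [hΔ.eq, spec, conjmul hUU]
      have : (fun i => (a i : ℂ) * (a i : ℂ)) = fun i => (e i : ℂ) * (e i : ℂ) := by
        funext i
        rw [← Complex.ofReal_mul, ← Complex.ofReal_mul]
        norm_cast
        exact abs_mul_abs_self _
      rw [this]
    have hsqrt : B = (Matrix.posSemidef_conjTranspose_mul_self Δ).isHermitian.eigenvectorUnitary.1 *
        Matrix.diagonal ((↑) ∘ Real.sqrt ∘
          (Matrix.posSemidef_conjTranspose_mul_self Δ).isHermitian.eigenvalues : Fin n → ℂ) *
        (star (Matrix.posSemidef_conjTranspose_mul_self Δ).isHermitian.eigenvectorUnitary :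
          Matrix (Fin n) (Fin n) ℂ) := by
      open scoped MatrixOrder in
      have h1 : CFC.sqrt (Δᴴ * Δ) = B :=
        CFC.sqrt_unique (by rw [← pow_two]; exact hB2) hBpsd.nonneg
      open scoped MatrixOrder in
      rw [← h1, CFC.sqrt_eq_real_sqrt _ (Matrix.posSemidef_conjTranspose_mul_self Δ).nonneg,
        cfcₙ_eq_cfc (hf0 := Real.sqrt_zero) (hf := Real.continuous_sqrt.continuousOn), (Matrix.posSemidef_conjTranspose_mul_self Δ).isHermitian.cfc_eq]
      rfl
    rw [traceNorm, ← hsqrt, hB, Matrix.trace_mul_cycle, hUU, one_mul, Matrix.trace_diagonal]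
    rw [show ∑ i, ((a i : ℝ) : ℂ) = ((∑ i, a i : ℝ) : ℂ) by push_cast; ring]
    exact Complex.ofReal_re _
  -- half-sum identity
  have hhalf : ∑ i, max (e i) 0 = (1 / 2) * ∑ i, |e i| := by
    have habs : ∀ x : ℝ, |x| = 2 * max x 0 - x := by
      intro x
      rcases le_total x 0 with h | h
      · rw [abs_of_nonpos h, max_eq_right h]; ring
      · rw [abs_of_nonneg h, max_eq_left h]; ring
    have : ∑ i, |e i| = 2 * ∑ i, max (e i) 0 - ∑ i, e i := by
      rw [Finset.mul_sum, ← Finset.sum_sub_distrib]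
      exact Finset.sum_congr rfl fun i _ => habs (e i)
    rw [this, hsum]; ring
  constructor
  · -- membership: the projector onto the positive part
    set d : Fin n → ℂ := fun i => if 0 < e i then 1 else 0 with hd
    refine ⟨U * diagonal d * star U, ⟨?_, ?_⟩, ?_⟩
    · apply Matrix.PosSemidef.mul_mul_conjTranspose_same
      refine Matrix.posSemidef_diagonal_iff.mpr fun i => ?_
      simp only [hd]
      split <;> simp
    · have h1 : (1 : Matrix (Fin n) (Fin n) ℂ) - U * diagonal d * star U
          = U * diagonal (fun i => 1 - d i) * star U := by
        have : diagonal (fun i => 1 - d i)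
            = (1 : Matrix (Fin n) (Fin n) ℂ) - diagonal d := by
          rw [← Matrix.diagonal_one, Matrix.diagonal_sub]
        rw [this, Matrix.mul_sub, Matrix.sub_mul, Matrix.mul_one, hUU']
      rw [h1]
      apply Matrix.PosSemidef.mul_mul_conjTranspose_same
      refine Matrix.posSemidef_diagonal_iff.mpr fun i => ?_
      simp only [hd]
      split <;> simp
    · have hmul : (U * diagonal d * star U) * ρ - (U * diagonal d * star U) * σ
          = (U * diagonal d * star U) * Δ := by rw [hΔdef, Matrix.mul_sub]
      have : ((U * diagonal d * star U) * ρ).trace.re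
            - ((U * diagonal d * star U) * σ).trace.re
          = ((U * diagonal d * star U) * Δ).trace.re := by
        rw [← hmul, Matrix.trace_sub, Complex.sub_re]
      rw [eq_comm, this, key]
      have hS : star U * (U * diagonal d * star U) * U = diagonal d := by
        have : star U * (U * diagonal d * star U) * U
            = (star U * U) * diagonal d * (star U * U) := by
          simp only [Matrix.mul_assoc]
        rw [this, hUU, one_mul, mul_one]
      rw [hS, Complex.re_sum, htn, ← hhalf]
      refine Finset.sum_congr rfl fun i _ => ?_
      simp only [Matrix.diagonal_apply_eq, hd]
      split_ifs with h
      · rw [one_mul, Complex.ofReal_re, max_eq_left h.le]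
      · rw [zero_mul, Complex.zero_re, max_eq_right (le_of_not_gt h)]
  · -- upper bound
    rintro x ⟨T, ⟨hT1, hT2⟩, rfl⟩
    have hx : (T * ρ).trace.re - (T * σ).trace.re = (T * Δ).trace.re := by
      rw [hΔdef, Matrix.mul_sub, Matrix.trace_sub, Complex.sub_re]
    rw [hx, key, Complex.re_sum, htn, ← hhalf]
    set S : Matrix (Fin n) (Fin n) ℂ := star U * T * U with hSdef
    have hSpsd : S.PosSemidef := by
      have := hT1.conjTranspose_mul_mul_same U
      simpa [hSdef, Matrix.star_eq_conjTranspose] using this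
    have hSub : ((1 : Matrix (Fin n) (Fin n) ℂ) - S).PosSemidef := by
      have h2 := hT2.conjTranspose_mul_mul_same U
      have : Uᴴ * (1 - T) * U = 1 - S := by
        rw [Matrix.mul_sub, Matrix.mul_one, Matrix.sub_mul, ← Matrix.star_eq_conjTranspose, hUU,
          ← hSdef]
      rwa [this] at h2
    refine Finset.sum_le_sum fun i _ => ?_
    have h0 : 0 ≤ (S i i).re := diag_re_nonneg hSpsd i
    have h1 : (S i i).re ≤ 1 := by
      have := diag_re_nonneg hSub i
      simp only [Matrix.sub_apply, Matrix.one_apply_eq, Complex.sub_re, Complex.one_re] at this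
      linarith
    have hre : (S i i * (e i : ℂ)).re = (S i i).re * e i := by
      simp [Complex.mul_re]
    rw [hre]
    rcases le_or_gt (e i) 0 with h | h
    · calc (S i i).re * e i ≤ 0 := mul_nonpos_of_nonneg_of_nonpos h0 h
        _ = max (e i) 0 := (max_eq_right h).symm
    · calc (S i i).re * e i ≤ 1 * e i := by nlinarith
        _ = max (e i) 0 := by rw [one_mul, max_eq_left h.le]
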